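/- arXiv:1711.03883 — 2 statements merged into one kernel-verified Lean document; each statement's English description precedes it below -/
import Mathlib

section
/- On the manifold M = S¹ × ℝ with the constant cone field C(θ,x) = ([0,∞) × [0,∞)) \ {(0,0)} ⊆ T_{(θ,x)}M ≅ ℝ², a continuous function f : M → ℝ is causal if and only if there exists a nondecreasing function g : ℝ → ℝ such that f(θ,x) = g(x) for all (θ,x). -/
/-!
Both directions reduce to the fact that the causal future of `(θ, x)` is `{(θ', x') | x ≤ x'}`.
Along a causal curve the `ℝ`-coordinate is Lipschitz with almost everywhere nonnegative
derivative, hence nondecreasing by the fundamental theorem of calculus for absolutely continuous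
functions. Conversely, a straight line of direction `(1, m)` with `m ≥ 0`, winding around the
circle, reaches every point `(θ', x')` with `x ≤ x'`.
-/

open Set MeasureTheory

noncomputable section

/-- The circle `ℝ/ℤ`. -/
abbrev S1 := AddCircle (1 : ℝ)

/-- Projection of a lift to `S¹ × ℝ`. -/
def pr (p : ℝ × ℝ) : S1 × ℝ := ((p.1 : S1), p.2)

/-- The constant cone `([0,∞) × [0,∞)) \\ {0}`. -/
def coneQ : Set (ℝ × ℝ) := {v | 0 ≤ v.1 ∧ 0 ≤ v.2 ∧ v ≠ 0}

/-- A causal curve in `S¹ × ℝ`, described by a Lipschitz lift whose derivative lies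
almost everywhere in the cone (or vanishes). -/
def IsCausalLift (γ : ℝ → ℝ × ℝ) (a b : ℝ) : Prop :=
  (∃ K : NNReal, LipschitzOnWith K γ (Set.Icc a b)) ∧
  ∀ᵐ t ∂(volume.restrict (Set.Icc a b)),
    DifferentiableAt ℝ γ t ∧ deriv γ t ∈ insert (0 : ℝ × ℝ) coneQ

/-- The causal future of a point of `S¹ × ℝ`. -/
def causalFutureQ (p : S1 × ℝ) : Set (S1 × ℝ) :=
  insert p {q | ∃ a b : ℝ, a < b ∧ ∃ γ : ℝ → ℝ × ℝ, IsCausalLift γ a b ∧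
    pr (γ a) = p ∧ pr (γ b) = q ∧ ∃ s ∈ Set.Icc a b, ∃ t ∈ Set.Icc a b, pr (γ s) ≠ pr (γ t)}

/-- A causal function on `S¹ × ℝ`. -/
def IsCausalFunQ (f : S1 × ℝ → ℝ) : Prop :=
  Continuous f ∧ ∀ p : S1 × ℝ, ∀ q ∈ causalFutureQ p, f p ≤ f q

theorem mem_insert_zero_coneQ_iff {v : ℝ × ℝ} : v ∈ insert 0 coneQ ↔ 0 ≤ v := by
  rcases eq_or_ne v 0 with rfl | hv
  · simp
  · simp [coneQ, hv, Prod.le_def]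

theorem LipschitzOnWith.le_of_ae_deriv_nonneg {h : ℝ → ℝ} {K : NNReal} {a b : ℝ} (hab : a ≤ b)
    (hlip : LipschitzOnWith K h (Icc a b)) (hderiv : 0 ≤ᵐ[volume.restrict (Icc a b)] deriv h) :
    h a ≤ h b := by
  rw [← uIcc_of_le hab] at hlip
  have hftc := hlip.absolutelyContinuousOnInterval.integral_deriv_eq_sub
  linarith [intervalIntegral.integral_nonneg_of_ae_restrict hab hderiv]

theorem IsCausalLift.snd_le {γ : ℝ → ℝ × ℝ} {a b : ℝ} (hγ : IsCausalLift γ a b) (hab : a ≤ b) :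
    (γ a).2 ≤ (γ b).2 := by
  obtain ⟨⟨K, hK⟩, hae⟩ := hγ
  refine LipschitzOnWith.le_of_ae_deriv_nonneg hab
    (LipschitzWith.prod_snd.comp_lipschitzOnWith hK) ?_
  filter_upwards [hae] with t ⟨hdiff, hcone⟩
  have hsnd : HasDerivAt (Prod.snd ∘ γ) (deriv γ t).2 t :=
    hasFDerivAt_snd.comp_hasDerivAt t hdiff.hasDerivAt
  rw [Pi.zero_apply, hsnd.deriv]
  exact (mem_insert_zero_coneQ_iff.1 hcone).2

theorem isCausalLift_of_hasDerivAt {γ : ℝ → ℝ × ℝ} {v : ℝ × ℝ} (hγ : ∀ t, HasDerivAt γ v t)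
    (hv : 0 ≤ v) (a b : ℝ) : IsCausalLift γ a b := by
  have hlip : LipschitzWith ‖v‖₊ γ :=
    lipschitzWith_of_nnnorm_deriv_le (fun t ↦ (hγ t).differentiableAt)
      fun t ↦ by rw [(hγ t).deriv]
  refine ⟨⟨_, hlip.lipschitzOnWith⟩, Filter.Eventually.of_forall fun t ↦ ?_⟩
  exact ⟨(hγ t).differentiableAt, (hγ t).deriv ▸ mem_insert_zero_coneQ_iff.2 hv⟩

theorem mem_causalFutureQ_of_snd_le {p q : S1 × ℝ} (hpq : p.2 ≤ q.2) : q ∈ causalFutureQ p := by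
  obtain ⟨θ, x⟩ := p
  obtain ⟨θ', x'⟩ := q
  obtain ⟨u, rfl⟩ := QuotientAddGroup.mk_surjective θ
  -- `w ≥ u + 1` makes the line pass through `u + 1 / 2`, which witnesses that it is nonconstant.
  obtain ⟨w, hw, rfl⟩ : θ' ∈ ((↑) : ℝ → S1) '' Ico (u + 1) (u + 1 + 1) := by
    rw [AddCircle.coe_image_Ico_eq]; exact mem_univ _
  have huw : u < w := by linarith [hw.1]
  set m := (x' - x) / (w - u)
  have hm : 0 ≤ m := div_nonneg (sub_nonneg.2 hpq) (sub_nonneg.2 huw.le)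
  have hγ : ∀ t, HasDerivAt (fun t ↦ (t, x + m * (t - u))) (1, m) t := fun t ↦ by
    simpa using (hasDerivAt_id t).prodMk ((((hasDerivAt_id t).sub_const u).const_mul m).const_add x)
  refine Or.inr ⟨u, w, huw, _, isCausalLift_of_hasDerivAt hγ ⟨zero_le_one, hm⟩ u w, by simp [pr],
    ?_, u, left_mem_Icc.2 huw.le, u + 1 / 2, ⟨by linarith, by linarith [hw.1]⟩, ?_⟩
  · simp [pr, m, div_mul_cancel₀ _ (sub_ne_zero.2 huw.ne')]
  · intro hγu
    have hθ : ((u : ℝ) : S1) = ((u + 1 / 2 : ℝ) : S1) := congrArg Prod.fst hγu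
    rw [AddCircle.coe_eq_coe_iff_of_mem_Ico (a := u) ⟨le_rfl, by linarith⟩
      ⟨by linarith, by linarith⟩] at hθ
    linarith

theorem mem_causalFutureQ_iff {p q : S1 × ℝ} : q ∈ causalFutureQ p ↔ p.2 ≤ q.2 := by
  refine ⟨?_, mem_causalFutureQ_of_snd_le⟩
  rintro (rfl | ⟨a, b, hab, γ, hγ, rfl, rfl, -⟩)
  · exact le_rfl
  · exact hγ.snd_le hab.le

/-- A continuous function on `S¹ × ℝ` is causal iff it is of the form `g(x)` with `g`
nondecreasing. -/
theorem causal_iff_monotone_of_snd (f : S1 × ℝ → ℝ) (hf : Continuous f) :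
    IsCausalFunQ f ↔ ∃ g : ℝ → ℝ, Monotone g ∧ ∀ p : S1 × ℝ, f p = g p.2 := by
  simp only [IsCausalFunQ, mem_causalFutureQ_iff, hf, true_and]
  constructor
  · intro hmono
    refine ⟨fun x ↦ f (0, x), fun x x' hx ↦ hmono _ _ hx, fun p ↦ ?_⟩
    exact le_antisymm (hmono p (0, p.2) le_rfl) (hmono (0, p.2) p le_rfl)
  · rintro ⟨g, hg, hfg⟩ p q hpq
    rw [hfg p, hfg q]
    exact hg hpq

end
end

section
/- On M = S¹ × ℝ with the cone field C(θ,x) = ([0,∞)×[0,∞)) \ {(0,0)}, a causal function f is special causal if and only if f is constant. -/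
open Set MeasureTheory

noncomputable section

/-- A neutral point of `f` on `S¹ × ℝ`. -/
def IsNeutralPtQ (f : S1 × ℝ → ℝ) (p : S1 × ℝ) : Prop :=
  ∃ q ∈ causalFutureQ p, q ≠ p ∧ f q = f p

/-- A special causal function on `S¹ × ℝ`: causal with dense set of strict values. -/
def IsSpecialCausalQ (f : S1 × ℝ → ℝ) : Prop :=
  IsCausalFunQ f ∧ Dense {a : ℝ | ¬ ∃ p : S1 × ℝ, IsNeutralPtQ f p ∧ f p = a}

/-!
Moving a point of `S¹ × ℝ` forward in the angle is causal, so a causal function `f` is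
nondecreasing along each horizontal circle; going once around, `f (θ, x) ≤ f (θ + 1/2, x) ≤
f (θ + 1, x) = f (θ, x)`, so every point is neutral and the strict values are exactly the
values `f` omits. The range of a continuous function on a connected space is an interval,
and an interval with dense complement is at most a point.
-/

section DenseComplRange

variable {X : Type*} [TopologicalSpace X] [PreconnectedSpace X]

lemma Continuous.apply_eq_of_dense_compl_range {β : Type*} [LinearOrder β] [TopologicalSpace β]
    [OrderClosedTopology β] [DenselyOrdered β] {g : X → β} (hg : Continuous g)
    (hd : Dense (range g)ᶜ) (x y : X) : g x = g y := by
  wlog hle : g x ≤ g y generalizing x y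
  · exact (this y x (le_of_not_ge hle)).symm
  refine hle.antisymm (not_lt.1 fun hlt => ?_)
  obtain ⟨z, hz, hzI⟩ := hd.exists_mem_open isOpen_Ioo (nonempty_Ioo.2 hlt)
  exact hz ((isPreconnected_range hg).Icc_subset ⟨x, rfl⟩ ⟨y, rfl⟩ (Ioo_subset_Icc_self hzI))

lemma Continuous.dense_compl_range_iff {g : X → ℝ} (hg : Continuous g) :
    Dense (range g)ᶜ ↔ ∃ c, ∀ x, g x = c := by
  constructor
  · intro hd
    rcases isEmpty_or_nonempty X with _ | ⟨⟨x₀⟩⟩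
    · exact ⟨0, isEmptyElim⟩
    · exact ⟨g x₀, fun x => hg.apply_eq_of_dense_compl_range hd x x₀⟩
  · rintro ⟨c, hc⟩
    refine (dense_compl_singleton c).mono (compl_subset_compl.2 ?_)
    rintro _ ⟨x, rfl⟩
    exact hc x

end DenseComplRange

lemma isCausalLift_horizontal (y a b : ℝ) : IsCausalLift (fun u => (u, y)) a b := by
  refine ⟨⟨_, (LipschitzWith.id.prodMk (LipschitzWith.const y)).lipschitzOnWith⟩,
    Filter.Eventually.of_forall fun u => ?_⟩
  have h : HasDerivAt (fun u : ℝ => ((u, y) : ℝ × ℝ)) (1, 0) u :=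
    (hasDerivAt_id u).prodMk (hasDerivAt_const u y)
  rw [h.deriv]
  exact ⟨h.differentiableAt, Or.inr ⟨zero_le_one, le_rfl, by simp⟩⟩

lemma mk_mem_causalFutureQ_of_le (y : ℝ) {a b : ℝ} (hab : a ≤ b) :
    ((b : S1), y) ∈ causalFutureQ ((a : S1), y) := by
  by_cases hc : (a : S1) = b
  · rw [hc]
    exact mem_insert _ _
  refine Or.inr ⟨a, b, hab.lt_of_ne (by rintro rfl; exact hc rfl), _,
    isCausalLift_horizontal y a b, rfl, rfl, a, ⟨le_rfl, hab⟩, b, ⟨hab, le_rfl⟩, ?_⟩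
  simpa [pr] using hc

namespace IsCausalFunQ

variable {f : S1 × ℝ → ℝ}

lemma apply_le_apply_of_le (hf : IsCausalFunQ f) (y : ℝ) {a b : ℝ} (hab : a ≤ b) :
    f ((a : S1), y) ≤ f ((b : S1), y) :=
  hf.2 _ _ (mk_mem_causalFutureQ_of_le y hab)

lemma isNeutralPtQ (hf : IsCausalFunQ f) (p : S1 × ℝ) : IsNeutralPtQ f p := by
  obtain ⟨⟨θ⟩, y⟩ := p
  have hθ : (θ : S1) ≠ ((θ + 1 / 2 : ℝ) : S1) := by
    rw [Ne, AddCircle.coe_eq_coe_iff_of_mem_Ico (a := θ) ⟨le_rfl, by linarith⟩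
      ⟨by linarith, by linarith⟩]
    linarith
  refine ⟨(((θ + 1 / 2 : ℝ) : S1), y), mk_mem_causalFutureQ_of_le y (by linarith),
    fun h => hθ (congrArg Prod.fst h).symm, ?_⟩
  have h_turn : f (((θ + 1 / 2 : ℝ) : S1), y) ≤ f ((θ : S1), y) := by
    rw [← AddCircle.coe_add_period (1 : ℝ) θ]
    exact hf.apply_le_apply_of_le y (by linarith)
  exact h_turn.antisymm (hf.apply_le_apply_of_le y (by linarith))

lemma strictValues_eq_compl_range (hf : IsCausalFunQ f) :
    {a : ℝ | ¬ ∃ p : S1 × ℝ, IsNeutralPtQ f p ∧ f p = a} = (range f)ᶜ := by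
  ext a
  simp only [mem_ofPred_eq, mem_compl_iff, mem_range]
  exact not_congr ⟨fun ⟨p, _, hp⟩ => ⟨p, hp⟩, fun ⟨p, hp⟩ => ⟨p, hf.isNeutralPtQ p, hp⟩⟩

end IsCausalFunQ

/-- On `S¹ × ℝ` a causal function is special causal iff it is constant. -/
theorem specialCausal_iff_constant (f : S1 × ℝ → ℝ) (hf : IsCausalFunQ f) :
    IsSpecialCausalQ f ↔ ∃ c : ℝ, ∀ p : S1 × ℝ, f p = c := by
  rw [IsSpecialCausalQ, hf.strictValues_eq_compl_range, ← hf.1.dense_compl_range_iff]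
  exact and_iff_right hf

end
end
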